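/- arXiv:2602.19886 — 9 statements merged into one kernel-verified Lean document; each statement's English description precedes it below -/
import Mathlib

section
/- Let F be a field and σ a ring automorphism of F[y]. If a and b are nonzero σ-special polynomials (i.e. a divides σ^k(a) for some nonzero integer k, and similarly for b), then the product a·b is σ-special. -/
/-! If `a ∣ τ a` for a multiplicative automorphism `τ`, then `a ∣ τⁿ a` for every `n ≥ 0` by
transitivity. For negative exponents one needs `τ a ∣ a`: the elements `τ⁻ⁿ a` form a descending
divisibility chain, which must have two associated consecutive terms when divisibility is
well-founded (as in `F[y]`); applying a power of `τ` makes `a` and `τ a` associated. Hence a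
`σ`-special `a` divides `σ^(k m) a` for any `m`, and `k m` works for `a` and `b` simultaneously. -/

namespace MulAut

variable {M : Type*}

theorem dvd_pow_apply_of_dvd [Monoid M] {τ : MulAut M} {a : M} (h : a ∣ τ a) :
    ∀ n : ℕ, a ∣ (τ ^ n) a
  | 0 => dvd_rfl
  | n + 1 => by
    rw [pow_succ', mul_apply]
    exact h.trans (map_dvd τ (dvd_pow_apply_of_dvd h n))

theorem apply_dvd_of_dvd_apply [CommMonoidWithZero M] [IsCancelMulZero M] [WfDvdMonoid M]
    {τ : MulAut M} {a : M} (h : a ∣ τ a) : τ a ∣ a := by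
  have : IsWellFounded M DvdNotUnit := ⟨wellFounded_dvdNotUnit⟩
  obtain ⟨n, hn⟩ := WellFounded.not_rel_apply_succ (r := DvdNotUnit) fun n ↦ (τ⁻¹ ^ n) a
  have hdvd : (τ⁻¹ ^ (n + 1)) a ∣ (τ⁻¹ ^ n) a := by
    simpa [pow_succ, mul_apply] using map_dvd (τ⁻¹ ^ (n + 1)) h
  have hback : (τ⁻¹ ^ n) a ∣ (τ⁻¹ ^ (n + 1)) a := by
    by_contra h'
    exact hn (dvd_and_not_dvd_iff.mp ⟨hdvd, h'⟩)
  have := map_dvd (τ ^ (n + 1)) hback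
  rwa [← mul_apply, ← mul_apply, inv_pow, inv_pow, mul_inv_cancel, pow_succ', mul_inv_cancel_right,
    one_apply] at this

theorem dvd_zpow_apply_of_dvd [CommMonoidWithZero M] [IsCancelMulZero M] [WfDvdMonoid M]
    {τ : MulAut M} {a : M} (h : a ∣ τ a) : ∀ j : ℤ, a ∣ (τ ^ j) a
  | (n : ℕ) => by simpa using dvd_pow_apply_of_dvd h n
  | .negSucc n => by
    have hinv : a ∣ τ⁻¹ a := by simpa using map_dvd τ⁻¹ (apply_dvd_of_dvd_apply h)
    rw [zpow_negSucc, ← inv_pow]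
    exact dvd_pow_apply_of_dvd hinv (n + 1)

end MulAut

theorem RingAut.dvd_zpow_mul_apply_of_dvd {R : Type*} [CommSemiring R] [IsCancelMulZero R]
    [WfDvdMonoid R] {σ : RingAut R} {a : R} {k : ℤ} (h : a ∣ (σ ^ k) a) (m : ℤ) :
    a ∣ (σ ^ (k * m)) a := by
  have := MulAut.dvd_zpow_apply_of_dvd (τ := RingAut.toMulAut R (σ ^ k)) h m
  rwa [← map_zpow, ← zpow_mul] at this

theorem sigma_special_mul_general (F : Type*) [Field F]
    (σ : RingAut (Polynomial F)) (a b : Polynomial F)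
    (ha : ∃ ℓ : ℤ, ℓ ≠ 0 ∧ a ∣ (σ ^ ℓ) a)
    (hb : ∃ ℓ : ℤ, ℓ ≠ 0 ∧ b ∣ (σ ^ ℓ) b) :
    ∃ ℓ : ℤ, ℓ ≠ 0 ∧ (a * b) ∣ (σ ^ ℓ) (a * b) := by
  obtain ⟨k, hk, hak⟩ := ha
  obtain ⟨m, hm, hbm⟩ := hb
  refine ⟨k * m, mul_ne_zero hk hm, ?_⟩
  rw [map_mul]
  exact mul_dvd_mul (RingAut.dvd_zpow_mul_apply_of_dvd hak m)
    (mul_comm m k ▸ RingAut.dvd_zpow_mul_apply_of_dvd hbm k)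

/-- The product of two nonzero σ-special polynomials is σ-special. -/
theorem sigma_special_mul (F : Type*) [Field F]
    (σ : RingAut (Polynomial F)) (a b : Polynomial F)
    (ha0 : a ≠ 0) (hb0 : b ≠ 0)
    (ha : ∃ ℓ : ℤ, ℓ ≠ 0 ∧ a ∣ (σ ^ ℓ) a)
    (hb : ∃ ℓ : ℤ, ℓ ≠ 0 ∧ b ∣ (σ ^ ℓ) b) :
    ∃ ℓ : ℤ, ℓ ≠ 0 ∧ (a * b) ∣ (σ ^ ℓ) (a * b) :=
  sigma_special_mul_general F σ a b ha hb
end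

section
/- Let F be a field and σ a ring automorphism of F[y]. Any divisor of a nonzero σ-special polynomial in F[y] is σ-special, assuming every irreducible polynomial is either σ-normal or σ-special and that σ maps irreducibles to irreducibles preserving degree. -/
/-!
If `p ∣ τ p` with `τ = σ ^ ℓ`, then `p ∣ τ ^ k p` for all `k : ℕ`, so every `τ ^ (-k) d` divides
`p`. A nonzero element of a UFD has only finitely many divisors up to associates, so two of them,
`τ ^ (-i) d` and `τ ^ (-j) d` with `i < j`, are associated; applying `τ ^ i` gives
`d ∣ σ ^ (ℓ * (i - j)) d`.
-/

theorem RingAut.dvd_pow_apply_of_dvd_apply {R : Type*} [Semiring R] {τ : RingAut R} {p : R}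
    (h : p ∣ τ p) (k : ℕ) : p ∣ (τ ^ k) p := by
  induction k with
  | zero => exact dvd_rfl
  | succ k ih => exact ih.trans (by rw [pow_succ, RingAut.mul_apply]; exact map_dvd _ h)

theorem UniqueFactorizationMonoid.exists_lt_associated_of_forall_dvd {α : Type*}
    [CommMonoidWithZero α] [UniqueFactorizationMonoid α] {p : α} (hp : p ≠ 0)
    (f : ℕ → α) (hf : ∀ k, f k ∣ p) : ∃ i j, i < j ∧ Associated (f i) (f j) := by
  have hfin : {x : Associates α | x ∣ Associates.mk p}.Finite :=
    @Finite.of_fintype _ (fintypeSubtypeDvd _ (Associates.mk_ne_zero.2 hp))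
  obtain ⟨i, j, hij, h⟩ := hfin.exists_lt_map_eq_of_forall_mem
    (f := fun k ↦ Associates.mk (f k)) fun k ↦ Associates.mk_dvd_mk.2 (hf k)
  exact ⟨i, j, hij, Associates.mk_eq_mk_iff_associated.1 h⟩

theorem sigma_special_of_dvd_general (F : Type*) [Field F]
    (σ : RingAut (Polynomial F))
    (p d : Polynomial F) (hp0 : p ≠ 0)
    (hp : ∃ ℓ : ℤ, ℓ ≠ 0 ∧ p ∣ (σ ^ ℓ) p)
    (hd : d ∣ p) :
    ∃ ℓ : ℤ, ℓ ≠ 0 ∧ d ∣ (σ ^ ℓ) d := by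
  obtain ⟨ℓ, hℓ, hpℓ⟩ := hp
  set τ := σ ^ ℓ
  have hdvd (k : ℕ) : (τ ^ (-(k : ℤ))) d ∣ p := by
    rw [← map_dvd_iff (τ ^ (k : ℤ)), ← RingAut.mul_apply, ← zpow_add, add_neg_cancel, zpow_zero,
      zpow_natCast]
    exact hd.trans (RingAut.dvd_pow_apply_of_dvd_apply hpℓ k)
  obtain ⟨i, j, hij, hassoc⟩ :=
    UniqueFactorizationMonoid.exists_lt_associated_of_forall_dvd hp0 _ hdvd
  refine ⟨ℓ * (i - j), mul_ne_zero hℓ (sub_ne_zero.2 (by exact_mod_cast hij.ne)), ?_⟩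
  have := map_dvd (τ ^ (i : ℤ)) hassoc.dvd
  rwa [← RingAut.mul_apply, ← zpow_add, add_neg_cancel, zpow_zero, ← RingAut.mul_apply,
    ← zpow_add, ← sub_eq_add_neg, ← zpow_mul] at this

/-- Any divisor of a nonzero σ-special polynomial is σ-special, under the
assumptions that every irreducible polynomial is either σ-normal or σ-special and
that σ maps irreducibles to irreducibles preserving degree. -/
theorem sigma_special_of_dvd (F : Type*) [Field F]
    (σ : RingAut (Polynomial F))
    (hdict : ∀ r : Polynomial F, Irreducible r →
      (∀ ℓ : ℤ, ℓ ≠ 0 → IsCoprime r ((σ ^ ℓ) r)) ∨ (∃ ℓ : ℤ, ℓ ≠ 0 ∧ r ∣ (σ ^ ℓ) r))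
    (hirr : ∀ r : Polynomial F, Irreducible r →
      Irreducible (σ r) ∧ (σ r).natDegree = r.natDegree)
    (p d : Polynomial F) (hp0 : p ≠ 0)
    (hp : ∃ ℓ : ℤ, ℓ ≠ 0 ∧ p ∣ (σ ^ ℓ) p)
    (hd : d ∣ p) :
    ∃ ℓ : ℤ, ℓ ≠ 0 ∧ d ∣ (σ ^ ℓ) d :=
  sigma_special_of_dvd_general F σ p d hp0 hp hd
end

section
/- Let K be a field of characteristic zero, F = K(x), and σ_y the shift automorphism of F[y] given by σ_y(y) = y + 1 (identity on F). A polynomial p ∈ F[y] is σ_y-special if and only if p ∈ F (i.e. p is a constant polynomial). -/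
open Polynomial

/-- In the usual shift case, a polynomial is σ-special iff it is a constant. -/
theorem sigma_special_iff_const_shift (F : Type*) [Field F] [CharZero F]
    (σ : RingAut (Polynomial F))
    (hC : ∀ c : F, σ (C c) = C c)
    (hX : σ X = X + 1)
    (p : Polynomial F) :
    (∃ ℓ : ℤ, ℓ ≠ 0 ∧ p ∣ (σ ^ ℓ) p) ↔ (∃ c : F, p = C c) := by
  have hσ : ∀ q : Polynomial F, σ q = q.comp (X + 1) := by
    intro q
    induction q using Polynomial.induction_on' with
    | add r s hr hs => simp [map_add, hr, hs, add_comp]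
    | monomial n a =>
      rw [← Polynomial.C_mul_X_pow_eq_monomial]
      simp [map_mul, map_pow, hC, hX, mul_comp, pow_comp, C_comp, X_comp]
  have keyN : ∀ n : ℕ, ∀ q : Polynomial F, (σ ^ n) q = q.comp (X + C (n : F)) := by
    intro n
    induction n with
    | zero =>
      intro q
      rw [pow_zero]
      show q = _
      simp
    | succ n ih =>
      intro q
      rw [pow_succ]
      show (σ ^ n) (σ q) = _
      rw [hσ, ih, Polynomial.comp_assoc]
      congr 1
      simp [add_comp, X_comp, one_comp]
      ring
  have keyNeg : ∀ n : ℕ, ∀ q : Polynomial F, ((σ ^ n)⁻¹) q = q.comp (X - C (n : F)) := by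
    intro n q
    have : (σ ^ n) (q.comp (X - C (n : F))) = q := by
      rw [keyN, Polynomial.comp_assoc]
      simp [sub_comp, X_comp, C_comp]
    calc ((σ ^ n)⁻¹) q = ((σ ^ n)⁻¹) ((σ ^ n) (q.comp (X - C (n : F)))) := by rw [this]
    _ = q.comp (X - C (n : F)) := by
        show ((σ ^ n)⁻¹ * (σ ^ n)) _ = _
        rw [inv_mul_cancel]
        rfl
  have key : ∀ ℓ : ℤ, ∀ q : Polynomial F, (σ ^ ℓ) q = q.comp (X + C ((ℓ : ℤ) : F)) := by
    intro ℓ q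
    obtain ⟨n, rfl | rfl⟩ := Int.eq_nat_or_neg ℓ
    · rw [zpow_natCast, keyN]; push_cast; ring_nf
    · rw [zpow_neg, zpow_natCast, keyNeg]
      push_cast
      rw [map_neg, ← sub_eq_add_neg]
  constructor
  · rintro ⟨ℓ, hℓ, hdvd⟩
    by_cases hp : p = 0
    · exact ⟨0, by simp [hp]⟩
    set a : F := ((ℓ : ℤ) : F) with ha
    have ha0 : a ≠ 0 := by
      simp only [ha, Ne, Int.cast_eq_zero]
      exact hℓ
    rw [key] at hdvd
    -- show the divisibility forces equality
    have hdeg : (p.comp (X + C a)).natDegree = p.natDegree := by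
      rw [Polynomial.natDegree_comp, Polynomial.natDegree_X_add_C, mul_one]
    have hlead : (p.comp (X + C a)).leadingCoeff = p.leadingCoeff := by
      rw [Polynomial.leadingCoeff_comp (by rw [Polynomial.natDegree_X_add_C]; norm_num)]
      simp [Polynomial.leadingCoeff_X_add_C]
    have hq0 : p.comp (X + C a) ≠ 0 := fun h => by
      rw [h, Polynomial.leadingCoeff_zero] at hlead
      exact (Polynomial.leadingCoeff_ne_zero.mpr hp) hlead.symm
    have heq : p.comp (X + C a) = p := by
      obtain ⟨r, hr⟩ := hdvd
      have hr0 : r ≠ 0 := by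
        rintro rfl
        rw [mul_zero] at hr
        exact hq0 hr
      have hdr : r.natDegree = 0 := by
        have := hdeg
        rw [hr, Polynomial.natDegree_mul hp hr0] at this
        omega
      have hrlc : r = C (r.coeff 0) := Polynomial.eq_C_of_natDegree_eq_zero hdr
      have hmul : p.leadingCoeff * r.leadingCoeff = p.leadingCoeff := by
        have h2 := hlead
        rw [hr, Polynomial.leadingCoeff_mul] at h2
        exact h2
      have hlc0 : p.leadingCoeff ≠ 0 := Polynomial.leadingCoeff_ne_zero.mpr hp
      have hr1 : r.leadingCoeff = 1 := by
        have := mul_left_cancel₀ hlc0 (by rw [hmul, mul_one] :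
          p.leadingCoeff * r.leadingCoeff = p.leadingCoeff * 1)
        exact this
      have : r.coeff 0 = 1 := by
        rw [Polynomial.leadingCoeff, hdr] at hr1
        exact hr1
      rw [hr, hrlc, this, map_one, mul_one]
    -- eval identity
    have hev : ∀ t : F, p.eval (t + a) = p.eval t := by
      intro t
      conv_rhs => rw [← heq]
      rw [Polynomial.eval_comp]
      simp
    have hseq : ∀ k : ℕ, p.eval ((k : F) * a) = p.eval 0 := by
      intro k
      induction k with
      | zero => simp
      | succ k ih =>
        have : ((k + 1 : ℕ) : F) * a = (k : F) * a + a := by push_cast; ring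
        rw [this, hev, ih]
    have hinf : {x : F | p.eval x = Polynomial.eval x (C (p.eval 0))}.Infinite := by
      apply Set.infinite_of_injective_forall_mem (f := fun k : ℕ => (k : F) * a)
      · intro i j hij
        have : (i : F) = j := mul_right_cancel₀ ha0 hij
        exact_mod_cast this
      · intro k
        simp [hseq k]
    have := Polynomial.eq_of_infinite_eval_eq p (C (p.eval 0)) hinf
    exact ⟨p.eval 0, this⟩
  · rintro ⟨c, rfl⟩
    refine ⟨1, one_ne_zero, ?_⟩
    rw [zpow_one, hC]
end

section
/- Let F be a field of characteristic zero containing an element q that is nonzero and not a root of unity, and let σ be the F-algebra automorphism of F[y] with σ(y) = q·y. Then a nonzero polynomial p ∈ F[y] is σ-special (p divides σ^ℓ(p) for some nonzero integer ℓ) if and only if p = c·y^k for some c ∈ F, c ≠ 0, and some natural number k. -/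
/-!
`σ ^ ℓ` is the substitution `y ↦ q ^ ℓ * y`, which multiplies the `n`-th coefficient by
`q ^ (ℓ * n)` and preserves the degree. Hence `p ∣ σ ^ ℓ p` forces `σ ^ ℓ p = c * p` for a
constant `c`, so `q ^ (ℓ * n) = c` at every `n` in the support of `p`; as `q` is not a root of
unity, these powers are pairwise distinct and the support is a single point.
-/

open Polynomial

namespace Polynomial

section CommSemiring

variable {R : Type*} [CommSemiring R]

theorem ringHom_apply_eq_comp {f : R[X] →+* R[X]} (hC : ∀ c, f (C c) = C c) (p : R[X]) :
    f p = p.comp (f X) :=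
  RingHom.congr_fun (ringHom_ext (g := compRingHom (f X)) (by simp [hC]) (by simp)) p

theorem comp_C_mul_X_comp_C_mul_X (p : R[X]) (a b : R) :
    (p.comp (C a * X)).comp (C b * X) = p.comp (C (a * b) * X) := by
  rw [comp_assoc, C_mul_comp, X_comp, C_mul, mul_assoc]

theorem C_mul_X_pow_dvd_comp_C_mul_X (c a : R) (k : ℕ) :
    C c * X ^ k ∣ (C c * X ^ k).comp (C a * X) :=
  ⟨C (a ^ k), by rw [C_mul_comp, X_pow_comp, mul_pow, C_pow]; ring⟩

theorem zpow_apply_eq_comp_C_mul_X {σ : RingAut R[X]} {u : Rˣ}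
    (hC : ∀ c, σ (C c) = C c) (hX : σ X = C (u : R) * X) (ℓ : ℤ) (p : R[X]) :
    (σ ^ ℓ) p = p.comp (C ((u ^ ℓ : Rˣ) : R) * X) := by
  have hσ (p : R[X]) : σ p = p.comp (C (u : R) * X) :=
    hX ▸ ringHom_apply_eq_comp (f := (σ : R[X] →+* R[X])) hC p
  have hσinv (p : R[X]) : σ⁻¹ p = p.comp (C ((u⁻¹ : Rˣ) : R) * X) := by
    apply σ.injective
    rw [show σ (σ⁻¹ p) = p from σ.apply_symm_apply p, hσ, comp_C_mul_X_comp_C_mul_X]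
    simp
  induction ℓ using Int.induction_on generalizing p with
  | zero => simp
  | succ i ih =>
    rw [zpow_add_one, RingAut.mul_apply, ih, hσ, comp_C_mul_X_comp_C_mul_X, zpow_add_one,
      Units.val_mul, mul_comm (u : R)]
  | pred i ih =>
    rw [zpow_sub_one, RingAut.mul_apply, ih, hσinv, comp_C_mul_X_comp_C_mul_X, zpow_sub_one,
      Units.val_mul, mul_comm ((u⁻¹ : Rˣ) : R)]

end CommSemiring

section IsDomain

variable {R : Type*} [CommRing R] [IsDomain R]

theorem exists_eq_mul_C_of_dvd_of_natDegree_le {p s : R[X]} (h : p ∣ s) (hs : s ≠ 0)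
    (hdeg : s.natDegree ≤ p.natDegree) : ∃ c, s = p * C c := by
  obtain ⟨r, rfl⟩ := h
  have hr : r.natDegree = 0 := by
    rw [natDegree_mul (left_ne_zero_of_mul hs) (right_ne_zero_of_mul hs)] at hdeg
    omega
  exact ⟨r.coeff 0, by rw [← eq_C_of_natDegree_eq_zero hr]⟩

theorem exists_eq_C_mul_X_pow_of_coeff_mul_pow_eq {p : R[X]} (hp : p ≠ 0) {a b : R}
    (ha : Function.Injective (a ^ · : ℕ → R)) (h : ∀ n, p.coeff n * a ^ n = p.coeff n * b) :
    ∃ (c : R) (k : ℕ), c ≠ 0 ∧ p = C c * X ^ k := by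
  have hsupp : p.support ⊆ {p.natDegree} := fun n hn ↦ Finset.mem_singleton.2 <| ha <|
    (mul_left_cancel₀ (mem_support_iff.1 hn) (h n)).trans
      (mul_left_cancel₀ (leadingCoeff_ne_zero.2 hp) (h _)).symm
  have hcard : p.support.card = 1 := by
    rw [(support_nonempty.2 hp).subset_singleton_iff.1 hsupp, Finset.card_singleton]
  obtain ⟨k, c, hc, hpk⟩ := card_support_eq_one.1 hcard
  exact ⟨c, k, hc, hpk⟩

theorem dvd_comp_C_mul_X_iff {p : R[X]} (hp : p ≠ 0) {a : R}
    (ha : Function.Injective (a ^ · : ℕ → R)) :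
    p ∣ p.comp (C a * X) ↔ ∃ (c : R) (k : ℕ), c ≠ 0 ∧ p = C c * X ^ k := by
  refine ⟨fun h ↦ ?_, fun ⟨c, k, _, hpk⟩ ↦ hpk ▸ C_mul_X_pow_dvd_comp_C_mul_X c a k⟩
  have ha0 : a ≠ 0 := fun ha0 ↦ by simpa [ha0] using @ha 1 2
  have hdeg : (p.comp (C a * X)).natDegree = p.natDegree := by
    rw [natDegree_comp, natDegree_C_mul_X a ha0, mul_one]
  obtain ⟨c, hc⟩ := exists_eq_mul_C_of_dvd_of_natDegree_le h
    ((comp_C_mul_X_eq_zero_iff (mem_nonZeroDivisors_of_ne_zero ha0)).not.2 hp) hdeg.le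
  refine exists_eq_C_mul_X_pow_of_coeff_mul_pow_eq hp ha (b := c) fun n ↦ ?_
  rw [← comp_C_mul_X_coeff, hc, coeff_mul_C]

end IsDomain

end Polynomial

theorem Units.injective_pow_val_zpow {M : Type*} [Monoid M] {u : Mˣ} (hu : ¬IsOfFinOrder u)
    {ℓ : ℤ} (hℓ : ℓ ≠ 0) : Function.Injective (((u ^ ℓ : Mˣ) : M) ^ · : ℕ → M) := by
  have hcomp : (((u ^ ℓ : Mˣ) : M) ^ · : ℕ → M) =
      Units.val ∘ (u ^ · : ℤ → Mˣ) ∘ (ℓ * ·) ∘ ((↑) : ℕ → ℤ) := by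
    ext n
    simp [zpow_mul]
  rw [hcomp]
  exact Units.val_injective.comp <| (injective_zpow_iff_not_isOfFinOrder.2 hu).comp <|
    (mul_right_injective₀ hℓ).comp Nat.cast_injective

theorem sigma_special_iff_monomial_qshift_general (F : Type*) [Field F]
    (q : F) (hq0 : q ≠ 0) (hqru : ∀ n : ℕ, 0 < n → q ^ n ≠ 1)
    (σ : RingAut (Polynomial F))
    (hC : ∀ c : F, σ (C c) = C c)
    (hX : σ X = C q * X)
    (p : Polynomial F) (hp0 : p ≠ 0) :
    (∃ ℓ : ℤ, ℓ ≠ 0 ∧ p ∣ (σ ^ ℓ) p) ↔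
      (∃ (c : F) (k : ℕ), c ≠ 0 ∧ p = C c * X ^ k) := by
  set u := Units.mk0 q hq0
  have hu : ¬IsOfFinOrder u := by
    rw [← Units.isOfFinOrder_val, isOfFinOrder_iff_pow_eq_one]
    simpa [u] using hqru
  have hσ := zpow_apply_eq_comp_C_mul_X (u := u) hC hX
  constructor
  · rintro ⟨ℓ, hℓ, hdvd⟩
    rw [hσ] at hdvd
    exact (dvd_comp_C_mul_X_iff hp0 (Units.injective_pow_val_zpow hu hℓ)).1 hdvd
  · intro hmono
    refine ⟨1, one_ne_zero, ?_⟩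
    rw [hσ]
    exact (dvd_comp_C_mul_X_iff hp0 (Units.injective_pow_val_zpow hu one_ne_zero)).2 hmono

/-- In the q-shift case, a nonzero polynomial is σ-special iff it is
a nonzero constant times a power of `y`. -/
theorem sigma_special_iff_monomial_qshift (F : Type*) [Field F] [CharZero F]
    (q : F) (hq0 : q ≠ 0) (hqru : ∀ n : ℕ, 0 < n → q ^ n ≠ 1)
    (σ : RingAut (Polynomial F))
    (hC : ∀ c : F, σ (C c) = C c)
    (hX : σ X = C q * X)
    (p : Polynomial F) (hp0 : p ≠ 0) :
    (∃ ℓ : ℤ, ℓ ≠ 0 ∧ p ∣ (σ ^ ℓ) p) ↔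
      (∃ (c : F) (k : ℕ), c ≠ 0 ∧ p = C c * X ^ k) :=
  sigma_special_iff_monomial_qshift_general F q hq0 hqru σ hC hX p hp0
end

section
/- Let F be a field of characteristic zero and σ the shift automorphism of F[y] (y ↦ y + 1). Let u, v ∈ F[y] with v ≠ 0, and define the F-linear map φ : F[y] → F[y] by φ(p) = u·σ(p) − v·p. If deg(u) ≠ deg(v), then for every polynomial p ≠ 0, deg(φ(p)) = deg(p) + max(deg u, deg v); in particular φ is injective and the set of degrees not attained by nonzero elements of the image of φ is exactly {0, 1, …, max(deg u, deg v) − 1}. -/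
open Polynomial

/-!
A ring endomorphism of `F[X]` fixing constants and sending `X` to `X + 1` is the Taylor shift,
so it preserves degrees. Hence `u·σ(p)` and `v·p` have degrees `deg u + deg p` and
`deg v + deg p`, which differ when `deg u ≠ deg v`; the degree of the difference is the larger
one. So `φ` raises degrees by exactly `m = max (deg u) (deg v)`, which forces `ker φ = 0`, and
the image contains `φ(X ^ k)` of every degree `k + m` but nothing of degree below `m`.
-/

namespace Polynomial

theorem ringHom_apply_eq_taylor {R : Type*} [CommSemiring R] {σ : R[X] →+* R[X]} {r : R}
    (hC : ∀ c, σ (C c) = C c) (hX : σ X = X + C r) (p : R[X]) : σ p = taylor r p :=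
  congrArg (· p) (ringHom_ext (g := (taylorAlgHom r).toRingHom) (by simpa using hC)
    (by simpa using hX))

theorem degree_mul_sub_mul_of_degree_ne {R : Type*} [Ring R] [NoZeroDivisors R]
    {u v p q : R[X]} (hq : q.degree = p.degree) (hp : p ≠ 0) (huv : u.degree ≠ v.degree) :
    (u * q - v * p).degree = p.degree + max u.degree v.degree := by
  have hp' : p.degree ≠ ⊥ := degree_ne_bot.mpr hp
  rw [add_comm p.degree]
  rcases huv.lt_or_gt with h | h
  · have hlt : (u * q).degree < (v * p).degree := by
      rw [degree_mul, degree_mul, hq]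
      exact WithBot.add_lt_add_right hp' h
    rw [degree_sub_eq_right_of_degree_lt hlt, degree_mul, max_eq_right h.le]
  · have hlt : (v * p).degree < (u * q).degree := by
      rw [degree_mul, degree_mul, hq]
      exact WithBot.add_lt_add_right hp' h
    rw [degree_sub_eq_left_of_degree_lt hlt, degree_mul, hq, max_eq_left h.le]

section DegreeShift

variable {R : Type*} {d : WithBot ℕ}

theorem injective_of_degree_eq_add [Ring R] {f : R[X] →+ R[X]} (hd : d ≠ ⊥)
    (hf : ∀ p, p ≠ 0 → (f p).degree = p.degree + d) : Function.Injective f := by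
  refine (injective_iff_map_eq_zero f).2 fun p hfp => by_contra fun hp => ?_
  have h := hf p hp
  rw [hfp, degree_zero, eq_comm, WithBot.add_eq_bot] at h
  exact h.elim (degree_ne_bot.mpr hp) hd

theorem forall_degree_ne_iff_lt_of_degree_eq_add [Semiring R] [Nontrivial R] {f : R[X] → R[X]}
    (hd : d ≠ ⊥)
    (hf : ∀ p, p ≠ 0 → (f p).degree = p.degree + d) (n : ℕ) :
    (∀ p, p ≠ 0 → (f p).degree ≠ n) ↔ (n : WithBot ℕ) < d := by
  lift d to ℕ using hd with m
  constructor
  · intro hmiss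
    by_contra! hmn
    have hmn : m ≤ n := WithBot.coe_le_coe.1 hmn
    refine hmiss (X ^ (n - m)) (monic_X_pow _).ne_zero ?_
    rw [hf _ (monic_X_pow _).ne_zero, degree_X_pow, Nat.cast_withBot, Nat.cast_withBot, ← WithBot.coe_add, Nat.sub_add_cancel hmn]
  · intro hlt p hp
    rw [hf p hp, degree_eq_natDegree hp]
    exact_mod_cast (hlt.trans_le (WithBot.coe_le_coe.2 (Nat.le_add_left m p.natDegree))).ne'

end DegreeShift

end Polynomial

theorem polynomial_reduction_degree_general (F : Type*) [Field F]
    (σ : RingAut (Polynomial F))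
    (hC : ∀ c : F, σ (C c) = C c)
    (hX : σ X = X + 1)
    (u v : Polynomial F) (hdeg : u.degree ≠ v.degree) :
    (∀ p : Polynomial F, p ≠ 0 →
        (u * σ p - v * p).degree = p.degree + max u.degree v.degree) ∧
    Function.Injective (fun p : Polynomial F => u * σ p - v * p) ∧
    (∀ n : ℕ, (∀ p : Polynomial F, p ≠ 0 → (u * σ p - v * p).degree ≠ (n : WithBot ℕ))
        ↔ (n : WithBot ℕ) < max u.degree v.degree) := by
  have hσ (p : F[X]) : (σ p).degree = p.degree := by
    rw [← degree_taylor p 1]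
    exact congrArg degree (ringHom_apply_eq_taylor (σ := σ.toRingHom) hC (by simpa using hX) p)
  have hφ (p : F[X]) (hp : p ≠ 0) :
      (u * σ p - v * p).degree = p.degree + max u.degree v.degree :=
    degree_mul_sub_mul_of_degree_ne (hσ p) hp hdeg
  have hmax : max u.degree v.degree ≠ ⊥ := fun h => hdeg <| by
    rw [(max_eq_bot.1 h).1, (max_eq_bot.1 h).2]
  let φ : F[X] →+ F[X] :=
    (AddMonoidHom.mulLeft u).comp σ.toAddMonoidHom - AddMonoidHom.mulLeft v
  exact ⟨hφ, injective_of_degree_eq_add (f := φ) hmax hφ,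
    forall_degree_ne_iff_lt_of_degree_eq_add hmax hφ⟩

/-- Degree behaviour of the polynomial reduction map `φ(p) = u·σ(p) − v·p`
when `deg u ≠ deg v`. -/
theorem polynomial_reduction_degree (F : Type*) [Field F] [CharZero F]
    (σ : RingAut (Polynomial F))
    (hC : ∀ c : F, σ (C c) = C c)
    (hX : σ X = X + 1)
    (u v : Polynomial F) (hv : v ≠ 0) (hdeg : u.degree ≠ v.degree) :
    (∀ p : Polynomial F, p ≠ 0 →
        (u * σ p - v * p).degree = p.degree + max u.degree v.degree) ∧
    Function.Injective (fun p : Polynomial F => u * σ p - v * p) ∧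
    (∀ n : ℕ, (∀ p : Polynomial F, p ≠ 0 → (u * σ p - v * p).degree ≠ (n : WithBot ℕ))
        ↔ (n : WithBot ℕ) < max u.degree v.degree) :=
  polynomial_reduction_degree_general F σ hC hX u v hdeg
end

section
/- Let K be a field of characteristic zero, q ∈ K nonzero and not a root of unity, and σ_x, σ_y the q-shift automorphisms of K[x,y] with x ↦ qx, y ↦ qy. If p ∈ K[x,y] is irreducible and there exist integers m, n, not both zero, with σ_x^m σ_y^n(p) an associate of p, then p(x,y) = x^α y^β P(x^λ y^μ) for some P ∈ K[z], integers α, β ≥ 0, and integers λ, μ not both zero. -/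
/-!
`σ_x^m σ_y^n` multiplies the monomial `x^i y^j` by `q^(m i + n j)`, so if it maps `p` to `c p`
then `q^(m i + n j) = c` on the support of `p`. As `q` is not a root of unity, the support lies on
a line `m i + n j = const`, whose lattice points are `(α, β) + t (λ, μ)`, `t ∈ ℤ`, with
`(λ, μ) = (n, -m) / gcd(m, n)`. Starting at the point of the support with least `t` gives
`p = x^α y^β P(x^λ y^μ)`.
-/

open MvPolynomial

structure IsVariableScaling {ι R : Type*} [CommRing R] (σ : RingAut (MvPolynomial ι R))
    (a : ι → Rˣ) : Prop where
  map_C : ∀ c, σ (C c) = C c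
  map_X : ∀ i, σ (X i) = C (a i : R) * X i

namespace IsVariableScaling

variable {ι R : Type*} [CommRing R] {σ τ : RingAut (MvPolynomial ι R)} {a b : ι → Rˣ}

theorem one : IsVariableScaling (1 : RingAut (MvPolynomial ι R)) 1 :=
  ⟨fun _ => rfl, fun _ => by simp⟩

theorem mul (hσ : IsVariableScaling σ a) (hτ : IsVariableScaling τ b) :
    IsVariableScaling (σ * τ) (a * b) where
  map_C c := by rw [RingAut.mul_apply, hτ.map_C, hσ.map_C]
  map_X i := by
    rw [RingAut.mul_apply, hτ.map_X, map_mul, hσ.map_C, hσ.map_X, Pi.mul_apply, Units.val_mul,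
      C_mul]
    ring

theorem inv (hσ : IsVariableScaling σ a) : IsVariableScaling σ⁻¹ a⁻¹ where
  map_C c := σ.injective (by rw [RingAut.inv_apply, σ.apply_symm_apply, hσ.map_C])
  map_X i := σ.injective (by
    rw [RingAut.inv_apply, σ.apply_symm_apply, map_mul, hσ.map_C, hσ.map_X, ← mul_assoc, ← C_mul,
      Pi.inv_apply, Units.inv_mul, C_1, one_mul])

theorem zpow (hσ : IsVariableScaling σ a) (k : ℤ) : IsVariableScaling (σ ^ k) (a ^ k) := by
  induction k using Int.induction_on with
  | zero => simpa using one
  | succ k ih => simpa only [zpow_add_one] using ih.mul hσ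
  | pred k ih => simpa only [zpow_sub_one] using ih.mul hσ.inv

theorem map_monomial (hσ : IsVariableScaling σ a) (d : ι →₀ ℕ) (c : R) :
    σ (monomial d c) = monomial d (↑(d.prod fun i e => a i ^ e) * c) := by
  simp only [monomial_eq, map_mul, hσ.map_C, Finsupp.prod, map_prod, map_pow, hσ.map_X, mul_pow,
    Finset.prod_mul_distrib, Units.coe_prod, Units.val_pow_eq_pow_val]
  ring

theorem coeff_apply (hσ : IsVariableScaling σ a) (p : MvPolynomial ι R) (d : ι →₀ ℕ) :
    coeff d (σ p) = ↑(d.prod fun i e => a i ^ e) * coeff d p := by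
  classical
  induction p using MvPolynomial.induction_on' with
  | monomial e c =>
    rw [hσ.map_monomial, coeff_monomial, coeff_monomial]
    split_ifs with h
    · rw [h]
    · rw [mul_zero]
  | add p p' hp hp' => rw [map_add, coeff_add, coeff_add, hp, hp', mul_add]

end IsVariableScaling

theorem IsCoprime.exists_eq_mul_of_mul_add_mul_eq_zero {R : Type*} [CommRing R] {a b i j : R}
    (h : IsCoprime a b) (hij : a * i + b * j = 0) : ∃ t, i = t * b ∧ j = -(t * a) := by
  obtain ⟨u, v, huv⟩ := h
  exact ⟨v * i - u * j, by linear_combination (-i) * huv + u * hij,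
    by linear_combination (-j) * huv + v * hij⟩

theorem exists_ray_of_forall_linear_eq (s : Finset (Fin 2 →₀ ℕ)) {m n : ℤ}
    (hmn : ¬(m = 0 ∧ n = 0))
    (hs : ∀ d ∈ s, ∀ d' ∈ s, m * d 0 + n * d 1 = m * d' 0 + n * d' 1) :
    ∃ (α β : ℕ) (lam mu : ℤ), ¬(lam = 0 ∧ mu = 0) ∧
      ∀ d ∈ s, ∃ t : ℕ, (d 0 : ℤ) = α + t * lam ∧ (d 1 : ℤ) = β + t * mu := by
  obtain ⟨g, m', n', hg, hcop, rfl, rfl⟩ := Int.exists_gcd_one' (Int.gcd_pos_iff.mpr (by tauto))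
  replace hcop := Int.isCoprime_iff_gcd_eq_one.mpr hcop
  have hne : n' ≠ 0 ∨ m' ≠ 0 := by
    by_contra! h
    exact not_isCoprime_zero_zero (h.1 ▸ h.2 ▸ hcop)
  have hdir : ¬(n' = 0 ∧ -m' = 0) := by rw [neg_eq_zero]; tauto
  rcases s.eq_empty_or_nonempty with rfl | hs₀
  · exact ⟨0, 0, n', -m', hdir, by simp⟩
  -- the ray starts at the point of `s` minimising the coordinate along `(n', -m')`
  obtain ⟨d₀, hd₀, hmin⟩ := s.exists_min_image (fun d => n' * d 0 - m' * d 1) hs₀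
  refine ⟨d₀ 0, d₀ 1, n', -m', hdir, fun d hd => ?_⟩
  have hline : m' * (d 0 - d₀ 0 : ℤ) + n' * (d 1 - d₀ 1 : ℤ) = 0 := by
    have := hs d hd d₀ hd₀
    have hg0 : (g : ℤ) ≠ 0 := by positivity
    apply mul_left_cancel₀ hg0
    linear_combination this
  obtain ⟨t, h₀, h₁⟩ := hcop.exists_eq_mul_of_mul_add_mul_eq_zero hline
  have ht : 0 ≤ t := by
    have hpos : 0 < n' ^ 2 + m' ^ 2 := by rcases hne with h | h <;> positivity
    have : 0 ≤ t * (n' ^ 2 + m' ^ 2) := by linear_combination hmin d hd + n' * h₀ - m' * h₁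
    exact nonneg_of_mul_nonneg_left this hpos
  lift t to ℕ using ht
  exact ⟨t, by linear_combination h₀, by linear_combination h₁⟩

theorem zpow_natCast_eq_pow_mul_zpow {G : Type*} [GroupWithZero G] {x : G} (hx : x ≠ 0)
    {a b : ℕ} {t : ℕ} {l : ℤ} (h : (b : ℤ) = a + t * l) : x ^ b = x ^ a * (x ^ l) ^ t := by
  rw [← zpow_natCast x b, h, zpow_add₀ hx, zpow_natCast, mul_comm, zpow_mul, zpow_natCast]

theorem eq_mul_eval₂_of_support_on_ray {K F : Type*} [Field K] [Field F]
    (φ : MvPolynomial (Fin 2) K →+* F) (hx : φ (X 0) ≠ 0) (hy : φ (X 1) ≠ 0)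
    {p : MvPolynomial (Fin 2) K} {α β : ℕ} {lam mu : ℤ}
    (hp : ∀ d ∈ p.support, ∃ t : ℕ, (d 0 : ℤ) = α + t * lam ∧ (d 1 : ℤ) = β + t * mu) :
    ∃ P : Polynomial K,
      φ p = φ (X 0 ^ α * X 1 ^ β) * P.eval₂ (φ.comp C) (φ (X 0) ^ lam * φ (X 1) ^ mu) := by
  choose! t ht using hp
  refine ⟨∑ d ∈ p.support, Polynomial.monomial (t d) (coeff d p), ?_⟩
  conv_lhs => rw [p.as_sum]
  simp only [Polynomial.eval₂_finsetSum, Polynomial.eval₂_monomial, RingHom.comp_apply, map_sum,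
    Finset.mul_sum]
  refine Finset.sum_congr rfl fun d hd => ?_
  rw [monomial_fin_two, map_mul, map_mul, map_mul, map_pow, map_pow, map_pow, map_pow,
    zpow_natCast_eq_pow_mul_zpow hx (ht d hd).1, zpow_natCast_eq_pow_mul_zpow hy (ht d hd).2,
    mul_pow]
  ring

theorem integer_linear_qshift_general (K : Type*) [Field K]
    (q : K) (hq0 : q ≠ 0) (hqru : ∀ n : ℕ, 0 < n → q ^ n ≠ 1)
    (σx σy : RingAut (MvPolynomial (Fin 2) K))
    (hxX : σx (X 0) = C q * X 0) (hxY : σx (X 1) = X 1)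
    (hxC : ∀ c : K, σx (C c) = C c)
    (hyX : σy (X 0) = X 0) (hyY : σy (X 1) = C q * X 1)
    (hyC : ∀ c : K, σy (C c) = C c)
    (p : MvPolynomial (Fin 2) K)
    (hassoc : ∃ m n : ℤ, ¬(m = 0 ∧ n = 0) ∧
      ∃ c : K, c ≠ 0 ∧ (σx ^ m) ((σy ^ n) p) = C c * p) :
    ∃ (P : Polynomial K) (α β : ℕ) (lam mu : ℤ), ¬(lam = 0 ∧ mu = 0) ∧
      algebraMap (MvPolynomial (Fin 2) K) (FractionRing (MvPolynomial (Fin 2) K)) p =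
        algebraMap (MvPolynomial (Fin 2) K) (FractionRing (MvPolynomial (Fin 2) K))
            (X 0 ^ α * X 1 ^ β) *
          Polynomial.eval₂
            ((algebraMap (MvPolynomial (Fin 2) K)
              (FractionRing (MvPolynomial (Fin 2) K))).comp (C : K →+* MvPolynomial (Fin 2) K))
            ((algebraMap (MvPolynomial (Fin 2) K)
                (FractionRing (MvPolynomial (Fin 2) K)) (X 0)) ^ lam *
              (algebraMap (MvPolynomial (Fin 2) K)
                (FractionRing (MvPolynomial (Fin 2) K)) (X 1)) ^ mu) P := by
  obtain ⟨m, n, hmn, c, -, hc⟩ := hassoc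
  set u := Units.mk0 q hq0
  have hu : Function.Injective fun k : ℤ => u ^ k := by
    refine injective_zpow_iff_not_isOfFinOrder.mpr fun h => ?_
    obtain ⟨k, hk, hk1⟩ := isOfFinOrder_iff_pow_eq_one.mp h
    exact hqru k hk (by simpa [u] using congrArg Units.val hk1)
  have hσx : IsVariableScaling σx ![u, 1] := ⟨hxC, fun i => by fin_cases i <;> simp [u, hxX, hxY]⟩
  have hσy : IsVariableScaling σy ![1, u] := ⟨hyC, fun i => by fin_cases i <;> simp [u, hyX, hyY]⟩
  have hweight : ∀ d ∈ p.support, (↑(u ^ (m * d 0 + n * d 1)) : K) = c := by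
    intro d hd
    have h := ((hσx.zpow m).mul (hσy.zpow n)).coeff_apply p d
    rw [RingAut.mul_apply, hc, coeff_C_mul, Finsupp.prod_fintype _ _ fun _ => pow_zero _,
      Fin.prod_univ_two] at h
    have hexp : (![u, 1] ^ m * ![1, u] ^ n) 0 ^ d 0 * (![u, 1] ^ m * ![1, u] ^ n) 1 ^ d 1 =
        u ^ (m * d 0 + n * d 1) := by
      simp [zpow_add, zpow_mul]
    rw [hexp] at h
    exact mul_right_cancel₀ (mem_support_iff.mp hd) h.symm
  have hline : ∀ d ∈ p.support, ∀ d' ∈ p.support, m * d 0 + n * d 1 = m * d' 0 + n * d' 1 :=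
    fun d hd d' hd' => hu (Units.ext ((hweight d hd).trans (hweight d' hd').symm))
  obtain ⟨α, β, lam, mu, hlm, hray⟩ := exists_ray_of_forall_linear_eq p.support hmn hline
  have hX (i : Fin 2) :
      algebraMap _ (FractionRing (MvPolynomial (Fin 2) K)) (X i : MvPolynomial (Fin 2) K) ≠ 0 :=
    (map_ne_zero_iff _ (IsFractionRing.injective _ _)).mpr (X_ne_zero i)
  obtain ⟨P, hP⟩ := eq_mul_eval₂_of_support_on_ray _ (hX 0) (hX 1) hray
  exact ⟨P, α, β, lam, mu, hlm, hP⟩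

/-- In the q-shift case, an irreducible polynomial `p ∈ K[x,y]` with
`σ_x^m σ_y^n(p)` an associate of `p` for some `(m,n) ≠ (0,0)` has the form
`x^α y^β P(x^λ y^μ)`, the Laurent monomial `x^λ y^μ` being interpreted in the
fraction field of `K[x,y]`. -/
theorem integer_linear_qshift (K : Type*) [Field K] [CharZero K]
    (q : K) (hq0 : q ≠ 0) (hqru : ∀ n : ℕ, 0 < n → q ^ n ≠ 1)
    (σx σy : RingAut (MvPolynomial (Fin 2) K))
    (hxX : σx (X 0) = C q * X 0) (hxY : σx (X 1) = X 1)
    (hxC : ∀ c : K, σx (C c) = C c)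
    (hyX : σy (X 0) = X 0) (hyY : σy (X 1) = C q * X 1)
    (hyC : ∀ c : K, σy (C c) = C c)
    (p : MvPolynomial (Fin 2) K) (hirr : Irreducible p)
    (hassoc : ∃ m n : ℤ, ¬(m = 0 ∧ n = 0) ∧
      ∃ c : K, c ≠ 0 ∧ (σx ^ m) ((σy ^ n) p) = C c * p) :
    ∃ (P : Polynomial K) (α β : ℕ) (lam mu : ℤ), ¬(lam = 0 ∧ mu = 0) ∧
      algebraMap (MvPolynomial (Fin 2) K) (FractionRing (MvPolynomial (Fin 2) K)) p =
        algebraMap (MvPolynomial (Fin 2) K) (FractionRing (MvPolynomial (Fin 2) K))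
            (X 0 ^ α * X 1 ^ β) *
          Polynomial.eval₂
            ((algebraMap (MvPolynomial (Fin 2) K)
              (FractionRing (MvPolynomial (Fin 2) K))).comp (C : K →+* MvPolynomial (Fin 2) K))
            ((algebraMap (MvPolynomial (Fin 2) K)
                (FractionRing (MvPolynomial (Fin 2) K)) (X 0)) ^ lam *
              (algebraMap (MvPolynomial (Fin 2) K)
                (FractionRing (MvPolynomial (Fin 2) K)) (X 1)) ^ mu) P :=
  integer_linear_qshift_general K q hq0 hqru σx σy hxX hxY hxC hyX hyY hyC p hassoc
end

section
/- Let K be a field of characteristic zero, let σ_x, σ_y be the shift automorphisms of K[x,y] (x ↦ x+1, y ↦ y+1), and let p ∈ K[x,y] be an irreducible integer-linear polynomial of the form p = P(λx + μy) with P ∈ K[z], gcd(λ, μ) = 1, μ > 0, and p σ_y-normal (gcd(p, σ_y^ℓ(p)) = 1 in K(x)[y] for all nonzero integers ℓ). Let δ = σ_x^s σ_y^t where sλ + tμ = 1. Then the μ polynomials p, δ(p), δ^2(p), …, δ^{μ−1}(p) are mutually σ_y-inequivalent, i.e. no one of them is an associate of a σ_y-power shift of another. -/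
/-!
Write `z = λx + μy`. Then `σ_x`, `σ_y` and `δ` act on polynomials in `z` as `z ↦ z + λ`,
`z ↦ z + μ` and `z ↦ z + 1`, so `δ^i p = P(z + i)` and `σ_y^ℓ δ^j p = P(z + j + ℓμ)`, and
`i ≠ j + ℓμ` because `i ≢ j (mod μ)`. In a relation `u δ^i p = v σ_y^ℓ δ^j p` with `u, v` free of
`y`, the prime `δ^i p` has positive `y`-degree, so it cannot divide `v` and must be associated to
`P(z + j + ℓμ)`. The specialisation `x ↦ 0, y ↦ X/μ` turns this into `P(X + i) ~ P(X + j + ℓμ)`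
in `K[X]`; comparing leading coefficients they are equal, so `P` has a nonzero period and is
constant in characteristic zero, contradicting the irreducibility of `p`.
-/

open MvPolynomial

theorem zpow_smul_eq_of_smul_eq {G α : Type*} [Group G] [MulAction G α] {g : G} {F : ℤ → α}
    {d : ℤ} (h : ∀ n, g • F n = F (n + d)) (k n : ℤ) : (g ^ k) • F n = F (n + k * d) := by
  have hinv : ∀ n, g⁻¹ • F n = F (n - d) := fun n => by
    rw [inv_smul_eq_iff, h, sub_add_cancel]
  induction k using Int.induction_on generalizing n with
  | zero => simp
  | succ k ih => rw [zpow_add_one, mul_smul, h, ih]; ring_nf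
  | pred k ih => rw [zpow_sub_one, mul_smul, hinv, ih]; ring_nf

theorem Polynomial.aeval_ringHomClass_apply {R A B F : Type*} [CommSemiring R] [Semiring A]
    [Semiring B] [Algebra R A] [Algebra R B] [FunLike F A B] [RingHomClass F A B] (f : F)
    (hf : ∀ c, f (algebraMap R A c) = algebraMap R B c) (x : A) (P : Polynomial R) :
    f (Polynomial.aeval x P) = Polynomial.aeval (f x) P :=
  (Polynomial.aeval_algHom_apply (AlgHom.mk (f : A →+* B) hf) x P).symm

theorem MvPolynomial.degreeOf_aeval {σ R : Type*} [CommRing R] [IsDomain R] (i : σ)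
    (g : MvPolynomial σ R) (P : Polynomial R) :
    degreeOf i (Polynomial.aeval g P) = P.natDegree * degreeOf i g := by
  classical
  let E : MvPolynomial σ R →ₐ[R] Polynomial (MvPolynomial {b // b ≠ i} R) :=
    (optionEquivLeft R _).toAlgHom.comp (rename (Equiv.optionSubtypeNe i).symm)
  have hE : ∀ q, degreeOf i q = (E q).natDegree := degreeOf_eq_natDegree i
  rw [hE, hE, ← Polynomial.aeval_algHom_apply, ← Polynomial.aeval_map_algebraMap
    (MvPolynomial {b // b ≠ i} R), ← Polynomial.comp_eq_aeval, Polynomial.natDegree_comp,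
    Polynomial.natDegree_map_eq_of_injective (f := algebraMap R _) (C_injective _ _)]

theorem Polynomial.natDegree_pos_of_irreducible_aeval {K A : Type*} [Field K] [Semiring A]
    [Algebra K A] {x : A} {P : Polynomial K} (h : Irreducible (Polynomial.aeval x P)) :
    0 < P.natDegree := by
  by_contra! h0
  rw [Polynomial.eq_C_of_natDegree_le_zero h0, Polynomial.aeval_C] at h
  rcases eq_or_ne (P.coeff 0) 0 with hc | hc
  · exact h.ne_zero (by rw [hc, map_zero])
  · exact h.not_isUnit ((Ne.isUnit hc).map _)

theorem Polynomial.taylor_eq_self_of_associated {R : Type*} [CommRing R] [IsDomain R]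
    {Q : Polynomial R} {d : R} (h : Associated Q (taylor d Q)) : taylor d Q = Q := by
  obtain ⟨w, hw⟩ := h
  obtain ⟨r, -, hr⟩ := Polynomial.isUnit_iff.mp w.isUnit
  rcases eq_or_ne Q 0 with rfl | hQ
  · simp
  have hr1 : r = 1 := by
    have := congrArg leadingCoeff hw
    rw [leadingCoeff_mul, leadingCoeff_taylor, ← hr, leadingCoeff_C] at this
    exact mul_left_cancel₀ (leadingCoeff_ne_zero.mpr hQ) (this.trans (mul_one _).symm)
  rw [← hw, ← hr, hr1, C_1, mul_one]

theorem Polynomial.natDegree_eq_zero_of_taylor_eq_self {R : Type*} [CommRing R] [IsDomain R]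
    [CharZero R] {Q : Polynomial R} {d : R} (hd : d ≠ 0) (h : taylor d Q = Q) :
    Q.natDegree = 0 := by
  have hperiod : ∀ k : ℕ, Q.eval (k * d) = Q.eval 0 := by
    intro k
    induction k with
    | zero => simp
    | succ k ih => rw [Nat.cast_succ, add_one_mul, ← taylor_eval, h, ih]
  have hinj : Function.Injective (fun k : ℕ => (k : R) * d) :=
    fun a b hab => Nat.cast_injective (mul_right_cancel₀ hd hab)
  rw [Q.eq_of_infinite_eval_eq (C (Q.eval 0)) (Set.infinite_of_injective_forall_mem hinj
    (by simpa using hperiod)), natDegree_C]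

theorem Polynomial.natDegree_eq_zero_of_associated_taylor_taylor {R : Type*} [CommRing R]
    [IsDomain R] [CharZero R] {P : Polynomial R} {a b : R} (hab : a ≠ b)
    (h : Associated (taylor a P) (taylor b P)) : P.natDegree = 0 := by
  have hba : taylor (b - a) (taylor a P) = taylor b P := by rw [taylor_taylor, sub_add_cancel]
  rw [← natDegree_taylor P a]
  exact natDegree_eq_zero_of_taylor_eq_self (sub_ne_zero.mpr hab.symm)
    (taylor_eq_self_of_associated (hba ▸ h))

theorem Int.ne_add_mul_of_lt {i j mu : ℤ} (hi : 0 ≤ i) (him : i < mu) (hj : 0 ≤ j)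
    (hjm : j < mu) (hij : i ≠ j) (ℓ : ℤ) : i ≠ j + ℓ * mu := by
  intro h
  apply hij
  rw [← Int.emod_eq_of_lt hi him, ← Int.emod_eq_of_lt hj hjm, h, Int.add_mul_emod_self_right]

section LinearSubst

variable {K : Type*} [Field K] (P : Polynomial K) (lam mu : ℤ)

noncomputable def linearSubst (n : ℤ) : MvPolynomial (Fin 2) K :=
  Polynomial.aeval (lam • X 0 + mu • X 1 + (n : MvPolynomial (Fin 2) K)) P

theorem linearSubst_zero :
    linearSubst P lam mu 0 = Polynomial.aeval (lam • X 0 + mu • X 1) P := by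
  simp [linearSubst]

theorem map_linearSubst (σ : RingAut (MvPolynomial (Fin 2) K)) (hC : ∀ c : K, σ (C c) = C c)
    {a b : ℤ} (h0 : σ (X 0) = X 0 + (a : MvPolynomial (Fin 2) K))
    (h1 : σ (X 1) = X 1 + (b : MvPolynomial (Fin 2) K)) (n : ℤ) :
    σ (linearSubst P lam mu n) = linearSubst P lam mu (n + (lam * a + mu * b)) := by
  rw [linearSubst, linearSubst, Polynomial.aeval_ringHomClass_apply σ hC]
  congr 2
  simp only [zsmul_eq_mul, map_add, map_mul, map_intCast, h0, h1]
  push_cast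
  ring

theorem degreeOf_one_linearSubst (hmu : (mu : K) ≠ 0) (n : ℤ) :
    degreeOf 1 (linearSubst P lam mu n) = P.natDegree := by
  have hlin : degreeOf 1 (lam • X 0 + mu • X 1 + (n : MvPolynomial (Fin 2) K)) = 1 := by
    have hrw : lam • X 0 + mu • X 1 + (n : MvPolynomial (Fin 2) K)
        = C (mu : K) * X 1 + (C (lam : K) * X 0 + C (n : K)) := by
      simp only [zsmul_eq_mul, map_intCast]; ring
    have hlow : degreeOf (1 : Fin 2) (C (lam : K) * X 0 + C (n : K)) < 1 := by
      have hsum := degreeOf_add_le (1 : Fin 2) (C (lam : K) * X 0) (C (n : K))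
      have hmul := degreeOf_C_mul_le (X 0 : MvPolynomial (Fin 2) K) 1 (lam : K)
      rw [degreeOf_X_of_ne (by decide), degreeOf_C] at *
      omega
    rw [hrw, degreeOf_add_eq_of_degreeOf_lt] <;>
      rw [degreeOf_C_mul _ _ (mem_nonZeroDivisors_of_ne_zero hmu), degreeOf_X_self]
    exact hlow
  rw [linearSubst, degreeOf_aeval, hlin, mul_one]

theorem zpow_linearSubst (σ : RingAut (MvPolynomial (Fin 2) K)) (hC : ∀ c : K, σ (C c) = C c)
    {a b : ℤ} (h0 : σ (X 0) = X 0 + (a : MvPolynomial (Fin 2) K))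
    (h1 : σ (X 1) = X 1 + (b : MvPolynomial (Fin 2) K)) (k n : ℤ) :
    (σ ^ k) (linearSubst P lam mu n) = linearSubst P lam mu (n + k * (lam * a + mu * b)) :=
  zpow_smul_eq_of_smul_eq (g := σ) (map_linearSubst P lam mu σ hC h0 h1) k n

theorem aeval_linearSubst (hmu : (mu : K) ≠ 0) (n : ℤ) :
    aeval ![0, Polynomial.C (mu : K)⁻¹ * Polynomial.X] (linearSubst P lam mu n)
      = Polynomial.taylor (n : K) P := by
  rw [linearSubst, ← Polynomial.aeval_algHom_apply, Polynomial.taylor_apply,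
    Polynomial.comp_eq_aeval]
  congr 2
  simp only [zsmul_eq_mul, map_add, map_mul, map_intCast, aeval_X, Matrix.cons_val_zero,
    Matrix.cons_val_one]
  rw [mul_zero, zero_add, ← mul_assoc, ← Polynomial.C_eq_intCast, ← Polynomial.C_mul,
    mul_inv_cancel₀ hmu, Polynomial.C_1, one_mul]

variable (σx σy : RingAut (MvPolynomial (Fin 2) K))

theorem zpow_linearSubst_of_shiftX (hxX : σx (X 0) = X 0 + 1) (hxY : σx (X 1) = X 1)
    (hxC : ∀ c : K, σx (C c) = C c) (k n : ℤ) :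
    (σx ^ k) (linearSubst P lam mu n) = linearSubst P lam mu (n + k * lam) := by
  simpa using zpow_linearSubst P lam mu σx hxC (a := 1) (b := 0) (by simp [hxX]) (by simp [hxY])
    k n

theorem zpow_linearSubst_of_shiftY (hyX : σy (X 0) = X 0) (hyY : σy (X 1) = X 1 + 1)
    (hyC : ∀ c : K, σy (C c) = C c) (k n : ℤ) :
    (σy ^ k) (linearSubst P lam mu n) = linearSubst P lam mu (n + k * mu) := by
  simpa using zpow_linearSubst P lam mu σy hyC (a := 0) (b := 1) (by simp [hyX]) (by simp [hyY])
    k n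

theorem zpow_linearSubst_of_shiftXY (hxX : σx (X 0) = X 0 + 1) (hxY : σx (X 1) = X 1)
    (hxC : ∀ c : K, σx (C c) = C c) (hyX : σy (X 0) = X 0) (hyY : σy (X 1) = X 1 + 1)
    (hyC : ∀ c : K, σy (C c) = C c) {s t : ℤ} (hst : s * lam + t * mu = 1) (k n : ℤ) :
    ((σx ^ s * σy ^ t) ^ k) (linearSubst P lam mu n) = linearSubst P lam mu (n + k) := by
  have hδ : ∀ n,
      (σx ^ s * σy ^ t) (linearSubst P lam mu n) = linearSubst P lam mu (n + 1) := by
    intro n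
    rw [RingAut.mul_apply, zpow_linearSubst_of_shiftY P lam mu σy hyX hyY hyC,
      zpow_linearSubst_of_shiftX P lam mu σx hxX hxY hxC]
    congr 1
    linear_combination hst
  simpa using zpow_smul_eq_of_smul_eq (g := σx ^ s * σy ^ t) hδ k n

end LinearSubst

theorem shift_classes_inequivalent_general (K : Type*) [Field K] [CharZero K]
    (σx σy : RingAut (MvPolynomial (Fin 2) K))
    (hxX : σx (X 0) = X 0 + 1) (hxY : σx (X 1) = X 1)
    (hxC : ∀ c : K, σx (C c) = C c)
    (hyX : σy (X 0) = X 0) (hyY : σy (X 1) = X 1 + 1)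
    (hyC : ∀ c : K, σy (C c) = C c)
    (P : Polynomial K) (lam mu s t : ℤ)
    (hmu : 0 < mu) (hst : s * lam + t * mu = 1)
    (p : MvPolynomial (Fin 2) K)
    (hp : p = Polynomial.aeval (lam • X 0 + mu • X 1) P)
    (hirr : Irreducible p) :
    ∀ i j : ℤ, 0 ≤ i → i < mu → 0 ≤ j → j < mu → i ≠ j →
      ¬ ∃ (ℓ : ℤ) (u v : MvPolynomial (Fin 2) K), u ≠ 0 ∧ v ≠ 0 ∧
          degreeOf 1 u = 0 ∧ degreeOf 1 v = 0 ∧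
          u * ((σx ^ s * σy ^ t) ^ i) p = v * ((σy ^ ℓ) (((σx ^ s * σy ^ t) ^ j) p)) := by
  rintro i j hi him hj hjm hij ⟨ℓ, u, v, -, hv, -, hdv, heq⟩
  set F := linearSubst P lam mu
  have hF : ∀ n, ((σx ^ s * σy ^ t) ^ n) p = F n := fun n => by
    rw [hp, ← linearSubst_zero,
      zpow_linearSubst_of_shiftXY P lam mu σx σy hxX hxY hxC hyX hyY hyC hst, zero_add]
  rw [hF, hF, zpow_linearSubst_of_shiftY P lam mu σy hyX hyY hyC] at heq
  have hirrF : ∀ n, Irreducible (F n) := fun n => hF n ▸ (MulEquiv.irreducible_iff _).mpr hirr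
  have hdeg : 0 < P.natDegree := Polynomial.natDegree_pos_of_irreducible_aeval (hp ▸ hirr)
  have hmuK : (mu : K) ≠ 0 := Int.cast_ne_zero.mpr hmu.ne'
  rcases (hirrF i).prime.dvd_or_dvd (Dvd.intro_left u heq) with ⟨c, rfl⟩ | hdvd
  · have hc : c ≠ 0 := by rintro rfl; simp at hv
    rw [degreeOf_mul_eq (hirrF i).ne_zero hc, degreeOf_one_linearSubst P lam mu hmuK] at hdv
    omega
  · have hassoc := ((hirrF i).associated_of_dvd (hirrF _) hdvd).map
      (aeval ![0, Polynomial.C (mu : K)⁻¹ * Polynomial.X])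
    rw [aeval_linearSubst P lam mu hmuK, aeval_linearSubst P lam mu hmuK] at hassoc
    refine hdeg.ne' (Polynomial.natDegree_eq_zero_of_associated_taylor_taylor ?_ hassoc)
    exact_mod_cast Int.ne_add_mul_of_lt hi him hj hjm hij ℓ

/-- For an irreducible integer-linear σ_y-normal polynomial `p = P(λx + μy)` with
`gcd(λ,μ) = 1`, `μ > 0`, and `δ = σ_x^s σ_y^t` with `sλ + tμ = 1`, the `μ`
polynomials `p, δ(p), …, δ^{μ−1}(p)` are mutually σ_y-inequivalent.
σ_y-equivalence over `K(x)` of `a` and `b` is expressed as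
`u·a = v·σ_y^ℓ(b)` for some nonzero `u, v` free of `y` (degree 0 in `y`). -/
theorem shift_classes_inequivalent (K : Type*) [Field K] [CharZero K]
    (σx σy : RingAut (MvPolynomial (Fin 2) K))
    (hxX : σx (X 0) = X 0 + 1) (hxY : σx (X 1) = X 1)
    (hxC : ∀ c : K, σx (C c) = C c)
    (hyX : σy (X 0) = X 0) (hyY : σy (X 1) = X 1 + 1)
    (hyC : ∀ c : K, σy (C c) = C c)
    (P : Polynomial K) (lam mu s t : ℤ)
    (hco : IsCoprime lam mu) (hmu : 0 < mu) (hst : s * lam + t * mu = 1)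
    (p : MvPolynomial (Fin 2) K)
    (hp : p = Polynomial.aeval (lam • X 0 + mu • X 1) P)
    (hirr : Irreducible p)
    (hnormal : ∀ ℓ : ℤ, ℓ ≠ 0 → ∀ d : MvPolynomial (Fin 2) K,
      d ∣ p → d ∣ (σy ^ ℓ) p → degreeOf 1 d = 0) :
    ∀ i j : ℤ, 0 ≤ i → i < mu → 0 ≤ j → j < mu → i ≠ j →
      ¬ ∃ (ℓ : ℤ) (u v : MvPolynomial (Fin 2) K), u ≠ 0 ∧ v ≠ 0 ∧
          degreeOf 1 u = 0 ∧ degreeOf 1 v = 0 ∧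
          u * ((σx ^ s * σy ^ t) ^ i) p = v * ((σy ^ ℓ) (((σx ^ s * σy ^ t) ^ j) p)) :=
  shift_classes_inequivalent_general K σx σy hxX hxY hxC hyX hyY hyC P lam mu s t hmu hst p hp hirr
end

section
/- Let F be a field of characteristic zero and σ the shift automorphism of F(y) (y ↦ y+1). For every nonzero rational function f ∈ F(y), there exist nonzero K, S ∈ F(y) with K σ-reduced (writing K = u/v in lowest terms, gcd(u, σ^ℓ(v)) = 1 for every integer ℓ) such that f = K · σ(S)/S. -/
/-!
Peel off shift-equivalent factors one at a time. If `p` and a shift `τ^ℓ q` share a nonconstant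
factor, write `p = τ^ℓ(g) p₁` and `q = g q₁`; then `p/q = (p₁/q₁) · σ^ℓ(g)/g`, and `σ^ℓ(g)/g` is a
quotient `σ(T)/T` (for `ℓ > 0` take `T = g σ(g) ⋯ σ^{ℓ-1}(g)`), which is absorbed into the shell.
The degree of the numerator drops, so the process stops at a σ-reduced kernel.
-/

open Polynomial

theorem Function.Semiconj.ringAut_zpow {A B : Type*} [Semiring A] [Semiring B] {f : A → B}
    {τ : RingAut A} {σ : RingAut B} (h : Function.Semiconj f τ σ) (j : ℤ) :
    Function.Semiconj f ⇑(τ ^ j) ⇑(σ ^ j) := by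
  induction j using Int.induction_on with
  | zero => exact Function.Semiconj.id_right
  | succ j ih => rw [zpow_add_one, zpow_add_one]; exact ih.comp_right h
  | pred j ih =>
    rw [zpow_sub_one, zpow_sub_one]
    exact ih.comp_right (h.inverses_right τ.apply_symm_apply σ.symm_apply_apply)

theorem exists_zpow_apply_div_eq_apply_div {L : Type*} [Field L] (σ : RingAut L) {a : L}
    (ha : a ≠ 0) (j : ℤ) : ∃ T : L, T ≠ 0 ∧ (σ ^ j) a / a = σ T / T := by
  induction j using Int.induction_on with
  | zero => exact ⟨1, one_ne_zero, by simp [div_self ha]⟩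
  | succ j ih =>
    obtain ⟨T, hT, hTe⟩ := ih
    have hb : (σ ^ (j : ℤ)) a ≠ 0 := (_root_.map_ne_zero _).2 ha
    refine ⟨(σ ^ (j : ℤ)) a * T, mul_ne_zero hb hT, ?_⟩
    rw [div_eq_div_iff ha hT] at hTe
    rw [add_comm, zpow_one_add, RingAut.mul_apply, map_mul, div_eq_div_iff ha (mul_ne_zero hb hT)]
    linear_combination σ ((σ ^ (j : ℤ)) a) * hTe
  | pred j ih =>
    obtain ⟨T, hT, hTe⟩ := ih
    have hb : (σ ^ (-(j : ℤ) - 1)) a ≠ 0 := (_root_.map_ne_zero _).2 ha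
    have hσb : σ ((σ ^ (-(j : ℤ) - 1)) a) = (σ ^ (-(j : ℤ))) a := by
      rw [← RingAut.mul_apply, ← zpow_one_add, add_sub_cancel]
    refine ⟨T / (σ ^ (-(j : ℤ) - 1)) a, div_ne_zero hT hb, ?_⟩
    rw [div_eq_div_iff ha hT] at hTe
    rw [map_div₀, hσb, div_div_div_eq, hTe, mul_div_mul_left _ _ ((_root_.map_ne_zero σ).2 hT)]

theorem exists_eq_apply_mul_of_not_isCoprime {F : Type*} [Field F] (e : F[X] ≃+* F[X])
    {p q : F[X]} (hp : p ≠ 0) (h : ¬IsCoprime p (e q)) :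
    ∃ g p₁ q₁ : F[X], p = e g * p₁ ∧ q = g * q₁ ∧ p₁.natDegree < p.natDegree := by
  obtain ⟨z, hz, hz0, ⟨p₁, rfl⟩, ⟨r, hr⟩⟩ : ∃ z ∈ nonunits F[X], z ≠ 0 ∧ z ∣ p ∧ z ∣ e q := by
    by_contra! H
    exact h (isCoprime_of_dvd _ _ (fun h0 => hp h0.1) H)
  refine ⟨e.symm z, p₁, e.symm r, by rw [e.apply_symm_apply], ?_, ?_⟩
  · rw [← map_mul, ← hr, e.symm_apply_apply]
  · rw [natDegree_mul hz0 (right_ne_zero_of_mul hp), lt_add_iff_pos_left,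
      natDegree_pos_iff_degree_pos]
    exact degree_pos_of_ne_zero_of_nonunit hz0 hz

section ShiftReduced

variable {F : Type*} [Field F]

def IsShiftReduced (τ : RingAut F[X]) (K : RatFunc F) : Prop :=
  ∀ ℓ : ℤ, IsCoprime K.num ((τ ^ ℓ) K.denom)

theorem isShiftReduced_div {τ : RingAut F[X]} {p q : F[X]} (hq : q ≠ 0)
    (h : ∀ ℓ : ℤ, IsCoprime p ((τ ^ ℓ) q)) :
    IsShiftReduced τ (algebraMap F[X] (RatFunc F) p / algebraMap F[X] (RatFunc F) q) := by
  intro ℓ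
  have hnum := RatFunc.num_div_dvd p hq
  have hdenom := map_dvd (τ ^ ℓ) (RatFunc.denom_div_dvd p q)
  exact ((h ℓ).of_isCoprime_of_dvd_left hnum).of_isCoprime_of_dvd_right hdenom

theorem exists_isShiftReduced_mul_div {τ : RingAut F[X]} {σ : RingAut (RatFunc F)}
    (hστ : Function.Semiconj (algebraMap F[X] (RatFunc F)) τ σ) {p q : F[X]} (hp : p ≠ 0)
    (hq : q ≠ 0) :
    ∃ K S : RatFunc F, K ≠ 0 ∧ S ≠ 0 ∧ IsShiftReduced τ K ∧
      algebraMap F[X] (RatFunc F) p / algebraMap F[X] (RatFunc F) q = K * σ S / S := by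
  induction hn : p.natDegree using Nat.strong_induction_on generalizing p q with
  | _ n ih =>
  by_cases hred : ∀ ℓ : ℤ, IsCoprime p ((τ ^ ℓ) q)
  · exact ⟨_, 1, div_ne_zero (RatFunc.algebraMap_ne_zero hp) (RatFunc.algebraMap_ne_zero hq),
      one_ne_zero, isShiftReduced_div hq hred, by simp⟩
  obtain ⟨ℓ, hℓ⟩ := not_forall.1 hred
  obtain ⟨g, p₁, q₁, rfl, rfl, hlt⟩ := exists_eq_apply_mul_of_not_isCoprime (τ ^ ℓ) hp hℓ
  obtain ⟨K, S, hK, hS, hKred, hKS⟩ :=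
    ih _ (hn ▸ hlt) (right_ne_zero_of_mul hp) (right_ne_zero_of_mul hq) rfl
  obtain ⟨T, hT, hTe⟩ := exists_zpow_apply_div_eq_apply_div σ
    (RatFunc.algebraMap_ne_zero (left_ne_zero_of_mul hq)) ℓ
  refine ⟨K, S * T, hK, mul_ne_zero hS hT, hKred, ?_⟩
  rw [map_mul, map_mul, mul_div_mul_comm, hστ.ringAut_zpow ℓ g, hTe, hKS, map_mul]
  ring

end ShiftReduced

theorem exists_rational_normal_form_general (F : Type*) [Field F]
    (τ : RingAut (Polynomial F)) (σ : RingAut (RatFunc F))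
    (hcompat : ∀ p : Polynomial F,
      σ (algebraMap (Polynomial F) (RatFunc F) p) = algebraMap (Polynomial F) (RatFunc F) (τ p))
    (f : RatFunc F) (hf : f ≠ 0) :
    ∃ K S : RatFunc F, K ≠ 0 ∧ S ≠ 0 ∧
      (∀ ℓ : ℤ, IsCoprime K.num ((τ ^ ℓ) K.denom)) ∧
      f = K * σ S / S := by
  rw [← RatFunc.num_div_denom f]
  exact exists_isShiftReduced_mul_div (fun p => (hcompat p).symm) (RatFunc.num_ne_zero hf)
    (RatFunc.denom_ne_zero f)

/-- Every nonzero rational function admits a rational normal form `(K, S)` with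
σ-reduced kernel `K`: `f = K · σ(S)/S`, where `gcd(num K, τ^ℓ(denom K)) = 1` for
every integer `ℓ` (τ being the shift on polynomials corresponding to σ). -/
theorem exists_rational_normal_form (F : Type*) [Field F] [CharZero F]
    (τ : RingAut (Polynomial F)) (σ : RingAut (RatFunc F))
    (hτC : ∀ c : F, τ (C c) = C c)
    (hτX : τ X = X + 1)
    (hcompat : ∀ p : Polynomial F,
      σ (algebraMap (Polynomial F) (RatFunc F) p) = algebraMap (Polynomial F) (RatFunc F) (τ p))
    (f : RatFunc F) (hf : f ≠ 0) :
    ∃ K S : RatFunc F, K ≠ 0 ∧ S ≠ 0 ∧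
      (∀ ℓ : ℤ, IsCoprime K.num ((τ ^ ℓ) K.denom)) ∧
      f = K * σ S / S :=
  exists_rational_normal_form_general F τ σ hcompat f hf
end

section
/- Let F be a field of characteristic zero and σ the shift automorphism of F(y) (y ↦ y + 1). Suppose f = K·σ(S)/S = K̃·σ(S̃)/S̃ are two rational normal forms of the same nonzero f ∈ F(y), where K and K̃ are σ-reduced. Then K/K̃ = σ(g)/g where g = S̃/S; consequently, writing the ratio K/K̃ in lowest terms as a/d, the degrees of a and d in y are equal. -/
open Polynomial

lemma tau_natDegree {F : Type*} [Field F] (τ : RingAut (Polynomial F))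
    (hτC : ∀ c : F, τ (C c) = C c) (hτX : τ X = X + 1) (p : Polynomial F) :
    (τ p).natDegree = p.natDegree := by
  have hext : (τ : Polynomial F →+* Polynomial F) = eval₂RingHom C (X + 1) := by
    apply Polynomial.ringHom_ext
    · intro a; simp [hτC a]
    · simp [hτX]
  have : τ p = p.comp (X + 1) := by
    have := congrArg (fun g : Polynomial F →+* Polynomial F => g p) hext
    simpa [Polynomial.comp] using this
  rw [this, natDegree_comp]
  have : (X + 1 : Polynomial F) = X + C 1 := by simp
  rw [this, natDegree_X_add_C]
  ring

/-- If `(K, S)` and `(K', S')` are two rational normal forms of the same nonzero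
rational function, then `K/K' = σ(g)/g` with `g = S'/S`, and the numerator and
denominator of `K/K'` in lowest terms have equal degree. -/
theorem two_rnf_kernels (F : Type*) [Field F] [CharZero F]
    (τ : RingAut (Polynomial F)) (σ : RingAut (RatFunc F))
    (hτC : ∀ c : F, τ (C c) = C c)
    (hτX : τ X = X + 1)
    (hcompat : ∀ p : Polynomial F,
      σ (algebraMap (Polynomial F) (RatFunc F) p) = algebraMap (Polynomial F) (RatFunc F) (τ p))
    (f K K' S S' : RatFunc F) (hf : f ≠ 0)
    (hK : K ≠ 0) (hK' : K' ≠ 0) (hS : S ≠ 0) (hS' : S' ≠ 0)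
    (hKred : ∀ ℓ : ℤ, IsCoprime K.num ((τ ^ ℓ) K.denom))
    (hK'red : ∀ ℓ : ℤ, IsCoprime K'.num ((τ ^ ℓ) K'.denom))
    (h1 : f = K * σ S / S) (h2 : f = K' * σ S' / S') :
    K / K' = σ (S' / S) / (S' / S) ∧
      (K / K').num.natDegree = (K / K').denom.natDegree := by
  have hσS : σ S ≠ 0 := fun h => hS (by simpa using σ.injective (by simpa using h))
  have hσS' : σ S' ≠ 0 := fun h => hS' (by simpa using σ.injective (by simpa using h))
  have heq : K * σ S / S = K' * σ S' / S' := h1 ▸ h2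
  have heq2 : K * σ S * S' = K' * σ S' * S := by
    field_simp at heq; linear_combination heq
  have hmain : K / K' = σ (S' / S) / (S' / S) := by
    rw [map_div₀]
    field_simp
    linear_combination heq2
  refine ⟨hmain, ?_⟩
  obtain ⟨g, hgdef⟩ : ∃ g : RatFunc F, g = S' / S := ⟨_, rfl⟩
  obtain ⟨r, hrdef⟩ : ∃ r : RatFunc F, r = K / K' := ⟨_, rfl⟩
  rw [← hgdef, ← hrdef] at hmain
  rw [← hrdef]
  have hg0 : g ≠ 0 := hgdef ▸ div_ne_zero hS' hS
  have hr0 : r ≠ 0 := hrdef ▸ div_ne_zero hK hK'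
  have hgnum : g.num ≠ 0 := RatFunc.num_ne_zero hg0
  have hgden : g.denom ≠ 0 := g.denom_ne_zero
  have hrden : r.denom ≠ 0 := r.denom_ne_zero
  have hrn : r.num ≠ 0 := RatFunc.num_ne_zero hr0
  have hτgn : τ g.num ≠ 0 := by simp [τ.injective.ne_iff, hgnum]
  have hτgd : τ g.denom ≠ 0 := by simp [τ.injective.ne_iff, hgden]
  have hgrep : (algebraMap (Polynomial F) (RatFunc F)) g.num /
      (algebraMap (Polynomial F) (RatFunc F)) g.denom = g := RatFunc.num_div_denom g
  have hrrep : (algebraMap (Polynomial F) (RatFunc F)) r.num /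
      (algebraMap (Polynomial F) (RatFunc F)) r.denom = r := RatFunc.num_div_denom r
  have hσg : σ g = (algebraMap (Polynomial F) (RatFunc F)) (τ g.num) /
      (algebraMap (Polynomial F) (RatFunc F)) (τ g.denom) := by
    conv_lhs => rw [← hgrep]
    rw [map_div₀, hcompat, hcompat]
  have h : r * g = σ g := by rw [hmain]; field_simp
  have h2 : (algebraMap (Polynomial F) (RatFunc F)) r.num /
        (algebraMap (Polynomial F) (RatFunc F)) r.denom *
        ((algebraMap (Polynomial F) (RatFunc F)) g.num /
        (algebraMap (Polynomial F) (RatFunc F)) g.denom) =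
      (algebraMap (Polynomial F) (RatFunc F)) (τ g.num) /
        (algebraMap (Polynomial F) (RatFunc F)) (τ g.denom) := by
    rw [hrrep, hgrep, ← hσg]; exact h
  have hτgd' : (algebraMap (Polynomial F) (RatFunc F)) (τ g.denom) ≠ 0 := by
    simp [RatFunc.algebraMap_ne_zero, hτgd]
  have hgd' : (algebraMap (Polynomial F) (RatFunc F)) g.denom ≠ 0 := by
    simp [RatFunc.algebraMap_ne_zero, hgden]
  have hrd' : (algebraMap (Polynomial F) (RatFunc F)) r.denom ≠ 0 := by
    simp [RatFunc.algebraMap_ne_zero, hrden]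
  rw [div_mul_div_comm, div_eq_div_iff (mul_ne_zero hrd' hgd') hτgd'] at h2
  have hA : (algebraMap (Polynomial F) (RatFunc F)) (r.num * (τ g.denom * g.num)) =
      (algebraMap (Polynomial F) (RatFunc F)) (r.denom * (τ g.num * g.denom)) := by
    rw [map_mul, map_mul, map_mul, map_mul]
    linear_combination h2
  have hpoly : r.num * (τ g.denom * g.num) = r.denom * (τ g.num * g.denom) :=
    RatFunc.algebraMap_injective F hA
  have hd := congrArg Polynomial.natDegree hpoly
  have hτn : (τ g.num).natDegree = g.num.natDegree := tau_natDegree τ hτC hτX g.num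
  have hτd : (τ g.denom).natDegree = g.denom.natDegree := tau_natDegree τ hτC hτX g.denom
  rw [natDegree_mul hrn (mul_ne_zero hτgd hgnum),
      natDegree_mul hrden (mul_ne_zero hτgn hgden),
      natDegree_mul hτgd hgnum, natDegree_mul hτgn hgden, hτn, hτd] at hd
  omega
end
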